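/- arXiv:1406.0449 — 3 statements merged into one kernel-verified Lean document; each statement's English description precedes it below -/
import Mathlib

section
/- Consider the fixed-m uniform WARM with n ≥ 3 colours and 2 ≤ m ≤ n−1, and let k be an integer with n−m+1 ≤ k ≤ n−1. Then the vector v = (1/k, …, 1/k, 0, …, 0) (value 1/k in the first k coordinates, 0 in the remaining n−k) is an equilibrium for every α > 1, and it is linearly stable if and only if α < C(n,m) / (k² · Σ_{r = max(m−k,0)}^{min(n−k, m−2)} C(n−k, r)·C(k−2, m−r−2)/(m−r)²), while it is critical if equality holds. -/
open Finset

noncomputable section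

/-- Membership in the simplex `Δ`. -/
def InSimplex {ι : Type*} [Fintype ι] (v : ι → ℝ) : Prop :=
  (∀ i, 0 ≤ v i) ∧ ∑ i, v i = 1

/-- A WARM weight: a probability distribution on the subsets of the colour set,
giving no mass to the empty set. -/
def IsWarmWeight {ι : Type*} [Fintype ι] [DecidableEq ι] (p : Finset ι → ℝ) : Prop :=
  p ∅ = 0 ∧ (∀ A, 0 ≤ p A ∧ p A ≤ 1) ∧ ∑ A : Finset ι, p A = 1

/-- The WARM vector field `F`. -/
def warmF {ι : Type*} [Fintype ι] [DecidableEq ι] (α : ℝ) (p : Finset ι → ℝ)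
    (v : ι → ℝ) (i : ι) : ℝ :=
  -v i + ∑ A ∈ Finset.univ.filter (fun A : Finset ι => i ∈ A),
      p A * v i ^ α / (∑ j ∈ A, v j ^ α)

/-- The Jacobian matrix `D(v)`. -/
def warmD {ι : Type*} [Fintype ι] [DecidableEq ι] (α : ℝ) (p : Finset ι → ℝ)
    (v : ι → ℝ) : Matrix ι ι ℝ :=
  Matrix.of fun i k =>
    if i = k then
      -1 + α * v i ^ (α - 1) *
        ∑ A ∈ Finset.univ.filter (fun A : Finset ι => i ∈ A),
          p A * ((∑ j ∈ A, v j ^ α) - v i ^ α) / (∑ j ∈ A, v j ^ α) ^ 2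
    else
      -(α * v k ^ (α - 1) * v i ^ α *
        ∑ A ∈ Finset.univ.filter (fun A : Finset ι => i ∈ A ∧ k ∈ A),
          p A / (∑ j ∈ A, v j ^ α) ^ 2)

/-- `μ ∈ ℂ` is an eigenvalue of the real matrix `M`, i.e. a root of its
characteristic polynomial. -/
def IsEigenvalue {ι : Type*} [Fintype ι] [DecidableEq ι] (M : Matrix ι ι ℝ) (μ : ℂ) : Prop :=
  (M.charpoly.map (algebraMap ℝ ℂ)).IsRoot μ

/-- Linear stability: every complex eigenvalue has negative real part. -/
def LinStable {ι : Type*} [Fintype ι] [DecidableEq ι] (M : Matrix ι ι ℝ) : Prop :=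
  ∀ μ : ℂ, IsEigenvalue M μ → μ.re < 0

/-- Linear instability: some eigenvalue has positive real part. -/
def LinUnstable {ι : Type*} [Fintype ι] [DecidableEq ι] (M : Matrix ι ι ℝ) : Prop :=
  ∃ μ : ℂ, IsEigenvalue M μ ∧ 0 < μ.re

/-- Critical: neither linearly stable nor linearly unstable. -/
def CriticalPt {ι : Type*} [Fintype ι] [DecidableEq ι] (M : Matrix ι ι ℝ) : Prop :=
  ¬ LinStable M ∧ ¬ LinUnstable M


/-- The fixed-`m` uniform WARM weight: uniform over all subsets of size `m`. -/
def unifP (n m : ℕ) : Finset (Fin n) → ℝ :=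
  fun A => if A.card = m then 1 / (n.choose m : ℝ) else 0

/-!
Let `K = {0, …, k-1}` and let `v` be the barycentre of the face of the simplex spanned by `K`.
Since `0 ^ α = 0`, every power sum `∑_{j ∈ A} v_j ^ α` equals `|A ∩ K| k^{-α}`, so each entry of
`F(v)` and `D(v)` is an average, over the `m`-sets `A` containing one or two given colours, of a
function of `|A ∩ K|`. Counting `m`-sets by the size of `A ∩ K` (Vandermonde) gives `F(v) = 0` and
`D(v) = -1 + β P`, where `β = α k² T / C(n,m)` with `T` the sum in the statement and `P` is the
orthogonal projection onto the vectors supported on `K` with zero sum. As `P` is a nonzero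
idempotent, the spectrum of `D(v)` lies in `{-1, β - 1}` and contains `β - 1`: the equilibrium is
linearly stable iff `β < 1` and critical when `β = 1`.
-/

section AffineIdempotent

open Polynomial

variable {𝕜 A : Type*} [Field 𝕜] [Ring A] [Algebra 𝕜 A] {p : A}

theorem IsIdempotentElem.one_mem_spectrum (hp : IsIdempotentElem p) (h0 : p ≠ 0) :
    (1 : 𝕜) ∈ spectrum 𝕜 p := by
  rw [spectrum.mem_iff, map_one]
  rintro ⟨u, hu⟩
  have : (u : A) * p = 0 := by rw [hu, sub_mul, one_mul, hp.eq, sub_self]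
  exact h0 (by simpa using congrArg ((↑u⁻¹ : A) * ·) this)

theorem aeval_C_add_C_mul_X (c β : 𝕜) :
    aeval p (C c + C β * X) = algebraMap 𝕜 A c + β • p := by
  simp [Algebra.smul_def]

theorem IsIdempotentElem.add_mem_spectrum_algebraMap_add_smul (hp : IsIdempotentElem p)
    (h0 : p ≠ 0) (c β : 𝕜) : c + β ∈ spectrum 𝕜 (algebraMap 𝕜 A c + β • p) := by
  have := spectrum.subset_polynomial_aeval p (C c + C β * X) ⟨1, hp.one_mem_spectrum h0, rfl⟩
  rw [aeval_C_add_C_mul_X] at this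
  simpa using this

theorem IsIdempotentElem.spectrum_algebraMap_add_smul_subset [IsAlgClosed 𝕜]
    (hp : IsIdempotentElem p) (h0 : p ≠ 0) (c β : 𝕜) :
    spectrum 𝕜 (algebraMap 𝕜 A c + β • p) ⊆ {c, c + β} := by
  rw [← aeval_C_add_C_mul_X,
    spectrum.map_polynomial_aeval_of_nonempty _ _ ⟨1, hp.one_mem_spectrum h0⟩]
  rintro _ ⟨x, hx, rfl⟩
  rcases hp.spectrum_subset 𝕜 hx with rfl | rfl <;> simp

end AffineIdempotent

theorem Matrix.map_algebraMap_ne_zero {m n : Type*} {P : Matrix m n ℝ} (hP0 : P ≠ 0) :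
    P.map (algebraMap ℝ ℂ) ≠ 0 := fun h =>
  hP0 (Matrix.map_injective (algebraMap ℝ ℂ).injective (h.trans (Matrix.map_zero _ rfl).symm))

theorem isEigenvalue_iff_mem_spectrum {ι : Type*} [Fintype ι] [DecidableEq ι]
    (M : Matrix ι ι ℝ) (μ : ℂ) :
    IsEigenvalue M μ ↔ μ ∈ spectrum ℂ (M.map (algebraMap ℝ ℂ)) := by
  rw [IsEigenvalue, ← Matrix.charpoly_map, Matrix.mem_spectrum_iff_isRoot_charpoly]

section NegOneAddSmulIdempotent

variable {ι : Type*} [Fintype ι] [DecidableEq ι] {P : Matrix ι ι ℝ}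

theorem isEigenvalue_neg_one_add_smul_iff (β : ℝ) (μ : ℂ) :
    IsEigenvalue (-1 + β • P) μ ↔
      μ ∈ spectrum ℂ (algebraMap ℂ (Matrix ι ι ℂ) (-1) + (β : ℂ) • P.map (algebraMap ℝ ℂ)) := by
  have hmap : (-1 + β • P).map (algebraMap ℝ ℂ)
      = algebraMap ℂ (Matrix ι ι ℂ) (-1) + (β : ℂ) • P.map (algebraMap ℝ ℂ) := by
    ext i j
    rcases eq_or_ne i j with rfl | h <;> simp [Matrix.one_apply_ne, *]
  rw [isEigenvalue_iff_mem_spectrum, hmap]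

variable (hP : IsIdempotentElem P) (hP0 : P ≠ 0)
include hP hP0

theorem isEigenvalue_neg_one_add_smul_sub_one (β : ℝ) :
    IsEigenvalue (-1 + β • P) (β - 1) := by
  rw [isEigenvalue_neg_one_add_smul_iff, sub_eq_neg_add]
  exact (hP.map (algebraMap ℝ ℂ).mapMatrix).add_mem_spectrum_algebraMap_add_smul
    (Matrix.map_algebraMap_ne_zero hP0) _ _

theorem eq_of_isEigenvalue_neg_one_add_smul {β : ℝ} {μ : ℂ}
    (h : IsEigenvalue (-1 + β • P) μ) : μ = -1 ∨ μ = β - 1 := by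
  rw [isEigenvalue_neg_one_add_smul_iff] at h
  rw [sub_eq_neg_add]
  exact (hP.map (algebraMap ℝ ℂ).mapMatrix).spectrum_algebraMap_add_smul_subset
    (Matrix.map_algebraMap_ne_zero hP0) _ _ h

theorem linStable_neg_one_add_smul_iff (β : ℝ) : LinStable (-1 + β • P) ↔ β < 1 := by
  refine ⟨fun h => by simpa using h _ (isEigenvalue_neg_one_add_smul_sub_one hP hP0 β), ?_⟩
  intro hβ μ hμ
  rcases eq_of_isEigenvalue_neg_one_add_smul hP hP0 hμ with rfl | rfl
  · simp
  · simpa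

theorem criticalPt_neg_one_add : CriticalPt (-1 + P) := by
  rw [← one_smul ℝ P]
  refine ⟨fun h => by simpa using (linStable_neg_one_add_smul_iff hP hP0 1).mp h, ?_⟩
  rintro ⟨μ, hμ, hre⟩
  rcases eq_of_isEigenvalue_neg_one_add_smul hP hP0 hμ with rfl | rfl <;> norm_num at hre

end NegOneAddSmulIdempotent

section CenteringMatrix

variable (𝕜 : Type*) {ι : Type*} [Field 𝕜] [DecidableEq ι]

def centeringMatrix (K : Finset ι) : Matrix ι ι 𝕜 :=
  Matrix.of fun i j => if i ∈ K ∧ j ∈ K then (if i = j then 1 else 0) - (#K : 𝕜)⁻¹ else 0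

variable [CharZero 𝕜]

theorem isIdempotentElem_centeringMatrix [Fintype ι] (K : Finset ι) :
    IsIdempotentElem (centeringMatrix 𝕜 K) := by
  ext i j
  simp only [Matrix.mul_apply, centeringMatrix, Matrix.of_apply]
  by_cases hij : i ∈ K ∧ j ∈ K
  · have hK : (#K : 𝕜) ≠ 0 := Nat.cast_ne_zero.mpr (card_ne_zero_of_mem hij.1)
    rw [if_pos hij, ← sum_subset (subset_univ K) fun l _ hl => by simp [hl]]
    simp [hij, sum_sub_distrib, mul_sub, sub_mul, hK]
  · simp only [if_neg hij]
    refine sum_eq_zero fun l _ => ?_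
    split_ifs <;> simp_all

theorem centeringMatrix_ne_zero {K : Finset ι} (hK : 1 < #K) : centeringMatrix 𝕜 K ≠ 0 := by
  obtain ⟨i, hi⟩ := card_pos.mp (zero_lt_one.trans hK)
  intro h
  have := congrFun (congrFun h i) i
  simp [centeringMatrix, hi, sub_eq_zero, hK.ne'] at this

end CenteringMatrix

section Counting

variable {ι : Type*} [Fintype ι] [DecidableEq ι]

theorem card_filter_powersetCard_superset_inter_card {K S : Finset ι} (hSK : S ⊆ K) {m a : ℕ}
    (hSa : #S ≤ a) (ham : a ≤ m) :
    #{A ∈ powersetCard m univ | S ⊆ A ∧ #(A ∩ K) = a}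
      = (#K - #S).choose (a - #S) * (#Kᶜ).choose (m - a) := by
  rw [← card_sdiff_of_subset hSK, ← card_powersetCard, ← card_powersetCard, ← card_product]
  refine card_nbij' (fun A => ((A ∩ K) \ S, A \ K)) (fun BC => S ∪ BC.1 ∪ BC.2) ?_ ?_ ?_ ?_
  · intro A hA
    simp only [coe_filter, mem_powersetCard, Set.mem_ofPred_eq, subset_univ, true_and] at hA
    obtain ⟨hcard, hSA, hAK⟩ := hA
    simp only [coe_product, Set.mem_prod, mem_coe, mem_powersetCard]
    refine ⟨⟨sdiff_subset_sdiff inter_subset_right subset_rfl, ?_⟩, fun x => by simp, ?_⟩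
    · rw [card_sdiff_of_subset (subset_inter hSA hSK), hAK]
    · rw [← sdiff_inter_self_left, card_sdiff_of_subset inter_subset_left, hcard, hAK]
  · intro BC hBC
    simp only [coe_product, Set.mem_prod, mem_coe, mem_powersetCard] at hBC
    obtain ⟨⟨hB, hBcard⟩, hC, hCcard⟩ := hBC
    simp only [coe_filter, mem_powersetCard, Set.mem_ofPred_eq, subset_univ, true_and]
    have hSK' := @hSK
    simp only [subset_iff, mem_sdiff, mem_compl] at hB hC hSK'
    have hBS : Disjoint S BC.1 := disjoint_left.mpr fun x hxS hxB => (hB hxB).2 hxS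
    have hSBC : Disjoint (S ∪ BC.1) BC.2 := disjoint_left.mpr fun x hx hxC => by grind
    have hSB : (S ∪ BC.1 ∪ BC.2) ∩ K = S ∪ BC.1 := by ext x; grind
    refine ⟨?_, subset_union_left.trans subset_union_left, ?_⟩
    · rw [card_union_of_disjoint hSBC, card_union_of_disjoint hBS]; omega
    · rw [hSB, card_union_of_disjoint hBS]; omega
  · intro A hA
    simp only [coe_filter, mem_powersetCard, Set.mem_ofPred_eq, subset_univ, true_and] at hA
    ext x
    have := @hA.2.1 x
    simp only [mem_union, mem_sdiff, mem_inter]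
    tauto
  · intro BC hBC
    simp only [coe_product, Set.mem_prod, mem_coe, mem_powersetCard] at hBC
    have hB := @hBC.1.1
    have hC := @hBC.2.1
    simp only [subset_iff, mem_sdiff, mem_compl] at hB hC
    ext x <;> grind

theorem sum_filter_powersetCard_superset {M : Type*} [AddCommMonoid M] {K S : Finset ι}
    (hSK : S ⊆ K) (m : ℕ) (f : ℕ → M) :
    ∑ A ∈ powersetCard m univ with S ⊆ A, f #(A ∩ K)
      = ∑ a ∈ Icc #S m, ((#K - #S).choose (a - #S) * (#Kᶜ).choose (m - a)) • f a := by
  have hmaps : ∀ A ∈ {A ∈ powersetCard m (univ : Finset ι) | S ⊆ A}, #(A ∩ K) ∈ Icc #S m := by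
    intro A hA
    rw [mem_filter, mem_powersetCard] at hA
    exact mem_Icc.mpr ⟨card_le_card (subset_inter hA.2 hSK),
      hA.1.2 ▸ card_le_card inter_subset_left⟩
  rw [← sum_fiberwise_of_maps_to' hmaps]
  refine sum_congr rfl fun a ha => ?_
  rw [sum_const, filter_filter, card_filter_powersetCard_superset_inter_card hSK
    (mem_Icc.mp ha).1 (mem_Icc.mp ha).2]

end Counting

theorem Nat.sum_Icc_one_choose_mul_choose {k j m : ℕ} (hjm : j < m) :
    ∑ a ∈ Icc 1 m, k.choose a * j.choose (m - a) = (k + j).choose m := by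
  rw [Nat.add_choose_eq, Nat.sum_antidiagonal_eq_sum_range_succ_mk, Nat.range_succ_eq_Icc_zero,
    ← sum_Ioc_add_eq_sum_Icc m.zero_le, Nat.sub_zero, Nat.choose_eq_zero_of_lt hjm, mul_zero,
    add_zero]
  rfl

theorem sum_Icc_choose_mul_choose_div {k j m : ℕ} (hk : k ≠ 0) (hjm : j < m) :
    ∑ a ∈ Icc 1 m, ((k - 1).choose (a - 1) * j.choose (m - a) : ℕ) * (a : ℝ)⁻¹
      = (k + j).choose m / k := by
  rw [eq_div_iff (Nat.cast_ne_zero.mpr hk), sum_mul, ← Nat.sum_Icc_one_choose_mul_choose hjm,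
    Nat.cast_sum]
  refine sum_congr rfl fun a ha => ?_
  have ha0 : (a : ℝ) ≠ 0 := Nat.cast_ne_zero.mpr (by grind)
  have absorb : (k * (k - 1).choose (a - 1) : ℝ) = k.choose a * a := by
    norm_cast
    simpa [Nat.sub_add_cancel (Nat.one_le_iff_ne_zero.mpr hk),
      Nat.sub_add_cancel (mem_Icc.mp ha).1] using Nat.add_one_mul_choose_eq (k - 1) (a - 1)
  field_simp
  push_cast
  linear_combination (j.choose (m - a) : ℝ) * absorb

def pairInvSqSum (n m k : ℕ) : ℝ :=
  ∑ r ∈ Icc (m - k) (min (n - k) (m - 2)),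
    ((n - k).choose r : ℝ) * ((k - 2).choose (m - r - 2) : ℝ) / ((m - r : ℕ) : ℝ) ^ 2

theorem sum_Icc_choose_mul_choose_div_sq {n m k : ℕ} (hm : 2 ≤ m) (hk : 2 ≤ k) :
    ∑ a ∈ Icc 2 m, ((k - 2).choose (a - 2) * (n - k).choose (m - a) : ℕ) * ((a : ℝ) ^ 2)⁻¹
      = pairInvSqSum n m k := by
  rw [pairInvSqSum, sum_subset (Icc_subset_Icc (Nat.zero_le (m - k)) (min_le_right _ _))]
  · refine sum_nbij' (m - ·) (m - ·) ?_ ?_ ?_ ?_ fun a ha => ?_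
    any_goals (intro a ha; simp only [mem_Icc] at ha ⊢; omega)
    rw [Nat.sub_sub_self (mem_Icc.mp ha).2]
    push_cast
    ring
  · intro r hr hr'
    simp only [mem_Icc] at hr hr'
    rcases Nat.lt_or_ge (n - k) r with h | h
    · simp [Nat.choose_eq_zero_of_lt h]
    · simp [Nat.choose_eq_zero_of_lt (by omega : k - 2 < m - r - 2)]

theorem pairInvSqSum_pos {n m k : ℕ} (hm : 0 < m) (hk : 2 ≤ k) (hmn : m ≤ n) :
    0 < pairInvSqSum n m k := by
  refine sum_pos' (fun r _ => by positivity) ⟨m - k, mem_Icc.mpr ⟨le_rfl, by omega⟩, ?_⟩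
  have h1 := Nat.choose_pos (by omega : m - k ≤ n - k)
  have h2 := Nat.choose_pos (by omega : m - (m - k) - 2 ≤ k - 2)
  have h3 : (0 : ℝ) < (m - (m - k) : ℕ) := by exact_mod_cast (by omega : 0 < m - (m - k))
  positivity

section IntersectionSums

variable {ι : Type*} [Fintype ι] [DecidableEq ι] {K : Finset ι} {m : ℕ}

theorem sum_inv_card_inter_of_mem {i : ι} (hi : i ∈ K) (hKm : #Kᶜ < m) :
    ∑ A ∈ powersetCard m univ with i ∈ A, (#(A ∩ K) : ℝ)⁻¹
      = (Fintype.card ι).choose m / #K := by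
  have h := sum_filter_powersetCard_superset (singleton_subset_iff.mpr hi) m (fun a => (a : ℝ)⁻¹)
  simp only [singleton_subset_iff, card_singleton, nsmul_eq_mul] at h
  rw [h, ← card_add_card_compl K]
  exact sum_Icc_choose_mul_choose_div (card_ne_zero_of_mem hi) hKm

theorem sum_inv_sq_card_inter_of_mem_of_mem {i j : ι} (hi : i ∈ K) (hj : j ∈ K) (hij : i ≠ j)
    (hm : 2 ≤ m) :
    ∑ A ∈ powersetCard m univ with i ∈ A ∧ j ∈ A, ((#(A ∩ K) : ℝ) ^ 2)⁻¹
      = pairInvSqSum (Fintype.card ι) m #K := by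
  have hij' : ({i, j} : Finset ι) ⊆ K := insert_subset hi (singleton_subset_iff.mpr hj)
  have h := sum_filter_powersetCard_superset hij' m (fun a => ((a : ℝ) ^ 2)⁻¹)
  simp only [insert_subset_iff, singleton_subset_iff, card_pair hij, nsmul_eq_mul] at h
  rw [h, card_compl]
  exact sum_Icc_choose_mul_choose_div_sq hm (card_le_card hij' |>.trans' (card_pair hij).ge)

/-- Double counting the pairs `(A, j)` with `j ∈ (A ∩ K) \ {i}`. -/
theorem sum_card_inter_sub_one_div_sq_of_mem {i : ι} (hi : i ∈ K) (hm : 2 ≤ m) :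
    ∑ A ∈ powersetCard m univ with i ∈ A, ((#(A ∩ K) : ℝ) - 1) / #(A ∩ K) ^ 2
      = (#K - 1) * pairInvSqSum (Fintype.card ι) m #K :=
  calc _ = ∑ A ∈ powersetCard m univ with i ∈ A,
          ∑ j ∈ (A ∩ K).erase i, ((#(A ∩ K) : ℝ) ^ 2)⁻¹ := by
        refine sum_congr rfl fun A hA => ?_
        have hiA : i ∈ A ∩ K := mem_inter.mpr ⟨(mem_filter.mp hA).2, hi⟩
        rw [sum_const, card_erase_of_mem hiA, nsmul_eq_mul,
          Nat.cast_pred (card_pos.mpr ⟨i, hiA⟩), div_eq_mul_inv]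
    _ = ∑ j ∈ K.erase i, ∑ A ∈ powersetCard m univ with i ∈ A ∧ j ∈ A,
          ((#(A ∩ K) : ℝ) ^ 2)⁻¹ :=
        sum_comm' fun A j => by simp only [mem_filter, mem_erase, mem_inter]; tauto
    _ = ∑ j ∈ K.erase i, pairInvSqSum (Fintype.card ι) m #K :=
        sum_congr rfl fun j hj =>
          sum_inv_sq_card_inter_of_mem_of_mem hi (mem_erase.mp hj).2 (mem_erase.mp hj).1.symm hm
    _ = _ := by
        rw [sum_const, card_erase_of_mem hi, nsmul_eq_mul, Nat.cast_pred (card_pos.mpr ⟨i, hi⟩)]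

end IntersectionSums

section FaceBarycenter

variable {ι : Type*} [DecidableEq ι]

def faceBarycenter (K : Finset ι) : ι → ℝ := fun i => if i ∈ K then 1 / (#K : ℝ) else 0

theorem sum_rpow_faceBarycenter {α : ℝ} (hα : α ≠ 0) (K A : Finset ι) :
    ∑ j ∈ A, faceBarycenter K j ^ α = #(A ∩ K) * (1 / (#K : ℝ)) ^ α := by
  simp [faceBarycenter, apply_ite (· ^ α), Real.zero_rpow hα, sum_ite_mem]

end FaceBarycenter

section UniformWarm

variable {n m : ℕ} {K : Finset (Fin n)} {α : ℝ}

theorem sum_filter_unifP_mul (P : Finset (Fin n) → Prop) [DecidablePred P]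
    (g : Finset (Fin n) → ℝ) :
    ∑ A ∈ univ with P A, unifP n m A * g A
      = (n.choose m : ℝ)⁻¹ * ∑ A ∈ powersetCard m univ with P A, g A := by
  rw [powersetCard_eq_filter, powerset_univ, filter_comm, sum_filter (#· = m), mul_sum]
  refine sum_congr rfl fun A _ => ?_
  simp only [unifP, one_div, ite_mul, zero_mul, mul_ite, mul_zero]

theorem warmF_unifP_faceBarycenter (hα : α ≠ 0) (hmn : m ≤ n) (hKm : #Kᶜ < m) (i : Fin n) :
    warmF α (unifP n m) (faceBarycenter K) i = 0 := by
  by_cases hi : i ∈ K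
  · have hK : (0 : ℝ) < #K := by exact_mod_cast card_pos.mpr ⟨i, hi⟩
    have hc : (1 / (#K : ℝ)) ^ α ≠ 0 := by positivity
    have hC : (n.choose m : ℝ) ≠ 0 := by exact_mod_cast (Nat.choose_pos hmn).ne'
    have hsum := sum_inv_card_inter_of_mem hi hKm
    rw [Fintype.card_fin] at hsum
    have hvi : faceBarycenter K i = 1 / #K := if_pos hi
    simp only [warmF, sum_rpow_faceBarycenter hα, hvi, mul_div_assoc, div_mul_cancel_right₀ hc]
    rw [sum_filter_unifP_mul (i ∈ ·), hsum]
    field_simp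
    ring
  · simp [warmF, faceBarycenter, hi, Real.zero_rpow hα]

theorem warmD_unifP_faceBarycenter_apply_self_of_mem (hα : α ≠ 0) (hm : 2 ≤ m) {i : Fin n}
    (hi : i ∈ K) :
    warmD α (unifP n m) (faceBarycenter K) i i
      = -1 + α * #K * (#K - 1) * pairInvSqSum n m #K / n.choose m := by
  have hK : (0 : ℝ) < #K := by exact_mod_cast card_pos.mpr ⟨i, hi⟩
  set c := (1 / (#K : ℝ)) ^ α with hc
  have hc0 : c ≠ 0 := by positivity
  have hsum := sum_card_inter_sub_one_div_sq_of_mem hi hm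
  rw [Fintype.card_fin] at hsum
  have hterm : ∀ A : Finset (Fin n), i ∈ A →
      unifP n m A * ((#(A ∩ K) * c - c) / (#(A ∩ K) * c) ^ 2)
        = unifP n m A * (((#(A ∩ K) : ℝ) - 1) / #(A ∩ K) ^ 2) * c⁻¹ := by
    intro A hA
    have ha : (#(A ∩ K) : ℝ) ≠ 0 :=
      Nat.cast_ne_zero.mpr (card_ne_zero_of_mem (mem_inter.mpr ⟨hA, hi⟩))
    field_simp
  have hvi : faceBarycenter K i = 1 / #K := if_pos hi
  simp only [warmD, Matrix.of_apply, if_true, sum_rpow_faceBarycenter hα, hvi, mul_div_assoc,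
    ← hc]
  rw [sum_congr rfl fun A hA => hterm A (mem_filter.mp hA).2, ← sum_mul,
    sum_filter_unifP_mul (i ∈ ·), hsum, Real.rpow_sub_one (by positivity)]
  field_simp
  ring

theorem warmD_unifP_faceBarycenter_apply_of_mem_of_mem (hα : α ≠ 0) (hm : 2 ≤ m) {i j : Fin n}
    (hi : i ∈ K) (hj : j ∈ K) (hij : i ≠ j) :
    warmD α (unifP n m) (faceBarycenter K) i j
      = -(α * #K * pairInvSqSum n m #K / n.choose m) := by
  have hK : (0 : ℝ) < #K := by exact_mod_cast card_pos.mpr ⟨i, hi⟩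
  have hc0 : (1 / (#K : ℝ)) ^ α ≠ 0 := by positivity
  have hsum := sum_inv_sq_card_inter_of_mem_of_mem hi hj hij hm
  rw [Fintype.card_fin] at hsum
  have hterm : ∀ A : Finset (Fin n), unifP n m A / (#(A ∩ K) * (1 / (#K : ℝ)) ^ α) ^ 2
      = unifP n m A * ((#(A ∩ K) : ℝ) ^ 2)⁻¹ * (((1 / (#K : ℝ)) ^ α) ^ 2)⁻¹ := fun A => by
    rw [mul_pow, div_eq_mul_inv, mul_inv, mul_assoc]
  have hvi : faceBarycenter K i = 1 / #K := if_pos hi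
  have hvj : faceBarycenter K j = 1 / #K := if_pos hj
  simp only [warmD, Matrix.of_apply, if_neg hij, sum_rpow_faceBarycenter hα, hvi, hvj, hterm]
  rw [← sum_mul, sum_filter_unifP_mul (fun A => i ∈ A ∧ j ∈ A), hsum,
    Real.rpow_sub_one (by positivity)]
  field_simp

theorem warmD_unifP_faceBarycenter (hα₀ : α ≠ 0) (hα₁ : α ≠ 1) (hm : 2 ≤ m) :
    warmD α (unifP n m) (faceBarycenter K)
      = -1 + (α * #K ^ 2 * pairInvSqSum n m #K / n.choose m) • centeringMatrix ℝ K := by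
  have hα₁' : α - 1 ≠ 0 := sub_ne_zero.mpr hα₁
  ext i j
  simp only [Matrix.add_apply, Matrix.neg_apply, Matrix.one_apply, Matrix.smul_apply,
    centeringMatrix, Matrix.of_apply, smul_eq_mul]
  by_cases hK : i ∈ K ∧ j ∈ K
  · have hK0 : (#K : ℝ) ≠ 0 := Nat.cast_ne_zero.mpr (card_ne_zero_of_mem hK.1)
    rw [if_pos hK]
    rcases eq_or_ne i j with rfl | hij
    · rw [warmD_unifP_faceBarycenter_apply_self_of_mem hα₀ hm hK.1, if_pos rfl]
      field_simp
    · rw [warmD_unifP_faceBarycenter_apply_of_mem_of_mem hα₀ hm hK.1 hK.2 hij, if_neg hij]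
      field_simp
      ring
  · rw [if_neg hK, mul_zero, add_zero]
    rcases eq_or_ne i j with rfl | hij
    · have hi : i ∉ K := fun hi => hK ⟨hi, hi⟩
      simp [warmD, faceBarycenter, hi, Real.zero_rpow hα₁']
    · rcases not_and_or.mp hK with hi | hj
      · simp [warmD, faceBarycenter, hi, hij, Real.zero_rpow hα₀]
      · simp [warmD, faceBarycenter, hj, hij, Real.zero_rpow hα₁']

end UniformWarm

theorem fixedm_partial_equilibrium_stability_general (n m k : ℕ)
    (hmn : m ≤ n - 1)
    (hk1 : n - m + 1 ≤ k) (hk2 : k ≤ n - 1)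
    (α : ℝ) (hα : 1 < α) :
    (∀ i, warmF α (unifP n m)
        (fun i : Fin n => if (i : ℕ) < k then 1 / (k : ℝ) else 0) i = 0) ∧
    (LinStable (warmD α (unifP n m)
        (fun i : Fin n => if (i : ℕ) < k then 1 / (k : ℝ) else 0)) ↔
      α < (n.choose m : ℝ) /
        ((k : ℝ) ^ 2 * ∑ r ∈ Finset.Icc (m - k) (min (n - k) (m - 2)),
          ((n - k).choose r : ℝ) * ((k - 2).choose (m - r - 2) : ℝ) /
            ((m - r : ℕ) : ℝ) ^ 2)) ∧
    (α = (n.choose m : ℝ) /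
        ((k : ℝ) ^ 2 * ∑ r ∈ Finset.Icc (m - k) (min (n - k) (m - 2)),
          ((n - k).choose r : ℝ) * ((k - 2).choose (m - r - 2) : ℝ) /
            ((m - r : ℕ) : ℝ) ^ 2) →
      CriticalPt (warmD α (unifP n m)
        (fun i : Fin n => if (i : ℕ) < k then 1 / (k : ℝ) else 0))) := by
  set K : Finset (Fin n) := {i | (i : ℕ) < k}
  have hK : #K = k := by rw [Fin.card_filter_val_lt]; omega
  have hv : (fun i : Fin n => if (i : ℕ) < k then 1 / (k : ℝ) else 0) = faceBarycenter K := by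
    ext i; simp [faceBarycenter, K, hK]
  have hC : (0 : ℝ) < n.choose m := by exact_mod_cast Nat.choose_pos (by omega)
  have hkT : (0 : ℝ) < k ^ 2 * pairInvSqSum n m k := by
    have := pairInvSqSum_pos (n := n) (by omega : 0 < m) (by omega : 2 ≤ k) (by omega)
    have : (0 : ℝ) < k := by exact_mod_cast (by omega : 0 < k)
    positivity
  have hP := isIdempotentElem_centeringMatrix ℝ K
  have hP0 := centeringMatrix_ne_zero ℝ (K := K) (by omega)
  simp only [← pairInvSqSum.eq_1, hv,
    warmD_unifP_faceBarycenter (K := K) (by linarith) hα.ne' (by omega : 2 ≤ m), hK]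
  refine ⟨warmF_unifP_faceBarycenter (by linarith) (by omega)
    (by rw [card_compl, hK, Fintype.card_fin]; omega), ?_, fun hcrit => ?_⟩
  · rw [linStable_neg_one_add_smul_iff hP hP0, lt_div_iff₀ hkT, ← mul_assoc, div_lt_one hC]
  · have hβ : α * k ^ 2 * pairInvSqSum n m k / n.choose m = 1 := by
      rw [hcrit, mul_assoc, div_mul_cancel₀ _ hkT.ne', div_self hC.ne']
    rw [hβ, one_smul]
    exact criticalPt_neg_one_add hP hP0

/-- **Stability in the fixed-`m` uniform WARM.** For `n−m+1 ≤ k ≤ n−1`, the vector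
`(1/k,…,1/k,0,…,0)` (value `1/k` on the first `k` coordinates) is an equilibrium for
every `α > 1`, and it is linearly stable iff
`α < C(n,m)/(k² Σ_{r=max(m−k,0)}^{min(n−k,m−2)} C(n−k,r) C(k−2,m−r−2)/(m−r)²)`,
critical if equality holds. -/
theorem fixedm_partial_equilibrium_stability (n m k : ℕ)
    (hn : 3 ≤ n) (hm : 2 ≤ m) (hmn : m ≤ n - 1)
    (hk1 : n - m + 1 ≤ k) (hk2 : k ≤ n - 1)
    (α : ℝ) (hα : 1 < α) :
    (∀ i, warmF α (unifP n m)
        (fun i : Fin n => if (i : ℕ) < k then 1 / (k : ℝ) else 0) i = 0) ∧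
    (LinStable (warmD α (unifP n m)
        (fun i : Fin n => if (i : ℕ) < k then 1 / (k : ℝ) else 0)) ↔
      α < (n.choose m : ℝ) /
        ((k : ℝ) ^ 2 * ∑ r ∈ Finset.Icc (m - k) (min (n - k) (m - 2)),
          ((n - k).choose r : ℝ) * ((k - 2).choose (m - r - 2) : ℝ) /
            ((m - r : ℕ) : ℝ) ^ 2)) ∧
    (α = (n.choose m : ℝ) /
        ((k : ℝ) ^ 2 * ∑ r ∈ Finset.Icc (m - k) (min (n - k) (m - 2)),
          ((n - k).choose r : ℝ) * ((k - 2).choose (m - r - 2) : ℝ) /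
            ((m - r : ℕ) : ℝ) ^ 2) →
      CriticalPt (warmD α (unifP n m)
        (fun i : Fin n => if (i : ℕ) < k then 1 / (k : ℝ) else 0))) :=
  fixedm_partial_equilibrium_stability_general n m k hmn hk1 hk2 α hα

end
end

section
/- Consider the WARM triangle graph. (a) For every α > 4/3 there exists exactly one equilibrium of the form (v, u, u) with v > u > 0 (so v + 2u = 1); moreover v(α) is strictly increasing on (4/3, ∞), with v(α) → 1/3 as α ↓ 4/3 and v(α) → 2/3 as α → ∞, and for 1 < α ≤ 4/3 no equilibrium of this form with v > u > 0 exists. (b) For every α with 1 < α < 4/3 there exists exactly one equilibrium of the form (v, v, u) with v > u > 0 (so 2v + u = 1); moreover v(α) is strictly decreasing on (1, 4/3), with v(α) → 1/2 as α ↓ 1 and v(α) → 1/3 as α ↑ 4/3, and for α ≥ 4/3 no equilibrium of this form with v > u > 0 exists. -/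
open Finset

noncomputable section

/-- The WARM triangle graph weight: each of the three two-element subsets of `[3]` gets
mass `1/3`. -/
def ptri : Finset (Fin 3) → ℝ := fun A => if A.card = 2 then 1 / 3 else 0

/-!
Writing `s = x / y` for a point `(x, y, y)` of the simplex, the three equilibrium equations
collapse to `s ^ α * (4 - s) = 3 * s`, that is, for `s ≠ 1`, to
`α = E s := 1 + log (3 / (4 - s)) / log s`. Reversing the coordinates turns `(v, v, u)` into
`(u, v, v)`, so part (b) is the branch `s = u / v < 1` of the same equation and part (a) the
branch `s = v / u > 1`. Since `E s - 1` is the quotient of the secant slopes of `log` through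
`3, 4 - s` and through `1, s`, concavity of `log` makes `E` strictly increasing on
`(0, 1) ∪ (1, 4)`; as `E` tends to `1`, `4 / 3`, `∞` at `0⁺`, `1`, `4⁻`, it maps `(0, 1)` onto
`(1, 4 / 3)` and `(1, 4)` onto `(4 / 3, ∞)`, and `v(α)` is read off from the inverse of `E`.
-/

open Real Filter Set Topology Function

theorem StrictConcaveOn.slope_lt_slope {𝕜 : Type*} [Field 𝕜] [LinearOrder 𝕜]
    [IsStrictOrderedRing 𝕜] {s : Set 𝕜} {f : 𝕜 → 𝕜} (hf : StrictConcaveOn 𝕜 s f) {a x y : 𝕜}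
    (ha : a ∈ s) (hx : x ∈ s) (hy : y ∈ s) (hxa : x ≠ a) (hya : y ≠ a) (hxy : x < y) :
    slope f a y < slope f a x := by
  simpa only [slope_def_field] using hf.secant_strict_mono ha hx hy hxa hya hxy

theorem mem_image_Ioo_of_eventually {α β : Type*} [ConditionallyCompleteLinearOrder α]
    [TopologicalSpace α] [OrderTopology α] [DenselyOrdered α] [NoMaxOrder α] [NoMinOrder α]
    [LinearOrder β] [TopologicalSpace β] [OrderClosedTopology β] {f : α → β} {a b : α} {y : β}
    (hab : a < b) (hf : ContinuousOn f (Ioo a b)) (ha : ∀ᶠ x in 𝓝[>] a, f x < y)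
    (hb : ∀ᶠ x in 𝓝[<] b, y < f x) : y ∈ f '' Ioo a b := by
  obtain ⟨x₀, hfx₀, hx₀⟩ := (ha.and (Ioo_mem_nhdsGT hab)).exists
  obtain ⟨x₁, hfx₁, hx₁⟩ := (hb.and (Ioo_mem_nhdsLT hx₀.2)).exists
  have hsub : Icc x₀ x₁ ⊆ Ioo a b := Icc_subset_Ioo hx₀.1 hx₁.2
  obtain ⟨x, hx, hfx⟩ := intermediate_value_Icc hx₁.1.le (hf.mono hsub) ⟨hfx₀.le, hfx₁.le⟩
  exact ⟨x, hsub hx, hfx⟩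

section InverseFunction

variable {α β : Type*} [LinearOrder α] [Nonempty α] [Preorder β] {f : α → β}

theorem StrictMonoOn.strictMonoOn_invFunOn {s : Set α} {t : Set β} (hf : StrictMonoOn f s)
    (h : SurjOn f s t) : StrictMonoOn (invFunOn f s) t := fun y hy z hz hyz =>
  (hf.lt_iff_lt (h.mapsTo_invFunOn hy) (h.mapsTo_invFunOn hz)).1 <| by
    rwa [h.rightInvOn_invFunOn hy, h.rightInvOn_invFunOn hz]

variable [TopologicalSpace α] [OrderTopology α] [DenselyOrdered α] {a b : α} {t : Set β}
  {l : Filter β}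

theorem StrictMonoOn.tendsto_invFunOn_left (hf : StrictMonoOn f (Ioo a b)) (hab : a < b)
    (h : SurjOn f (Ioo a b) t) (ht : ∀ᶠ y in l, y ∈ t) (hl : ∀ x ∈ Ioo a b, ∀ᶠ y in l, y < f x) :
    Tendsto (invFunOn f (Ioo a b)) l (𝓝 a) := by
  refine tendsto_order.2 ⟨fun c hc => ht.mono fun y hy => hc.trans (h.mapsTo_invFunOn hy).1,
    fun c hc => ?_⟩
  obtain ⟨x, hax, hxc⟩ := exists_between (lt_min hc hab)
  have hx : x ∈ Ioo a b := ⟨hax, hxc.trans_le (min_le_right _ _)⟩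
  filter_upwards [ht, hl x hx] with y hy hyx
  rw [← h.rightInvOn_invFunOn hy, hf.lt_iff_lt (h.mapsTo_invFunOn hy) hx] at hyx
  exact hyx.trans (hxc.trans_le (min_le_left _ _))

theorem StrictMonoOn.tendsto_invFunOn_right (hf : StrictMonoOn f (Ioo a b)) (hab : a < b)
    (h : SurjOn f (Ioo a b) t) (ht : ∀ᶠ y in l, y ∈ t) (hl : ∀ x ∈ Ioo a b, ∀ᶠ y in l, f x < y) :
    Tendsto (invFunOn f (Ioo a b)) l (𝓝 b) := by
  refine tendsto_order.2 ⟨fun c hc => ?_,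
    fun c hc => ht.mono fun y hy => (h.mapsTo_invFunOn hy).2.trans hc⟩
  obtain ⟨x, hcx, hxb⟩ := exists_between (max_lt hc hab)
  have hx : x ∈ Ioo a b := ⟨(le_max_right _ _).trans_lt hcx, hxb⟩
  filter_upwards [ht, hl x hx] with y hy hxy
  rw [← h.rightInvOn_invFunOn hy, hf.lt_iff_lt hx (h.mapsTo_invFunOn hy)] at hxy
  exact ((le_max_left _ _).trans_lt hcx).trans hxy

end InverseFunction

section TriangleField

variable (α a b c : ℝ)

theorem warmF_ptri_zero : warmF α ptri ![a, b, c] 0 =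
    -a + 1 / 3 * a ^ α / (a ^ α + b ^ α) + 1 / 3 * a ^ α / (a ^ α + c ^ α) := by
  rw [warmF, show univ.filter (fun A : Finset (Fin 3) => 0 ∈ A) =
    {{0}, {0, 1}, {0, 2}, {0, 1, 2}} by decide]
  simp +decide [ptri]
  ring

theorem warmF_ptri_one : warmF α ptri ![a, b, c] 1 =
    -b + 1 / 3 * b ^ α / (a ^ α + b ^ α) + 1 / 3 * b ^ α / (b ^ α + c ^ α) := by
  rw [warmF, show univ.filter (fun A : Finset (Fin 3) => 1 ∈ A) =
    {{1}, {0, 1}, {1, 2}, {0, 1, 2}} by decide]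
  simp +decide [ptri]
  ring

theorem warmF_ptri_two : warmF α ptri ![a, b, c] 2 =
    -c + 1 / 3 * c ^ α / (a ^ α + c ^ α) + 1 / 3 * c ^ α / (b ^ α + c ^ α) := by
  rw [warmF, show univ.filter (fun A : Finset (Fin 3) => 2 ∈ A) =
    {{2}, {0, 2}, {1, 2}, {0, 1, 2}} by decide]
  simp +decide [ptri]
  ring

theorem warmF_ptri_rev (i : Fin 3) :
    warmF α ptri ![c, b, a] i = warmF α ptri ![a, b, c] i.rev := by
  fin_cases i <;> simp [warmF_ptri_zero, warmF_ptri_one, warmF_ptri_two, add_comm] <;> ring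

theorem forall_warmF_ptri_rev_eq_zero :
    (∀ i, warmF α ptri ![c, b, a] i = 0) ↔ ∀ i, warmF α ptri ![a, b, c] i = 0 := by
  refine (forall_congr' fun i => ?_).trans Fin.revPerm.forall_congr_right
  rw [warmF_ptri_rev, Fin.revPerm_apply]

end TriangleField

section VUU
variable {α x y : ℝ}

theorem warmF_ptri_vuu_zero_mul (hx : 0 < x) (hy : 0 < y) (hsum : x + 2 * y = 1) :
    warmF α ptri ![x, y, y] 0 * (3 * (x / y + 2) * ((x / y) ^ α + 1)) =
      (x / y) ^ α * (4 - x / y) - 3 * (x / y) := by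
  have hxy : x ^ α = (x / y) ^ α * y ^ α := by
    rw [← mul_rpow (div_pos hx hy).le hy.le, div_mul_cancel₀ _ hy.ne']
  have hy' : 0 < y ^ α := rpow_pos_of_pos hy α
  have hs' : 0 < (x / y) ^ α := rpow_pos_of_pos (div_pos hx hy) α
  rw [warmF_ptri_zero, hxy]
  field_simp
  linear_combination (-3 * x * ((x / y) ^ α + 1)) * hsum

theorem warmF_ptri_vuu_one (hx : 0 < x) (hy : 0 < y) (hsum : x + 2 * y = 1) :
    warmF α ptri ![x, y, y] 1 = -warmF α ptri ![x, y, y] 0 / 2 := by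
  have hx' : 0 < x ^ α := rpow_pos_of_pos hx α
  have hy' : 0 < y ^ α := rpow_pos_of_pos hy α
  rw [warmF_ptri_zero, warmF_ptri_one]
  field_simp
  linear_combination (-6 * (x ^ α + y ^ α)) * hsum

theorem warmF_ptri_vuu_two (hx : 0 < x) (hy : 0 < y) (hsum : x + 2 * y = 1) :
    warmF α ptri ![x, y, y] 2 = -warmF α ptri ![x, y, y] 0 / 2 := by
  rw [← warmF_ptri_vuu_one hx hy hsum, warmF_ptri_one, warmF_ptri_two, add_comm (x ^ α)]

theorem forall_warmF_ptri_vuu_eq_zero_iff (hx : 0 < x) (hy : 0 < y) (hsum : x + 2 * y = 1) :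
    (∀ i, warmF α ptri ![x, y, y] i = 0) ↔ (x / y) ^ α * (4 - x / y) = 3 * (x / y) := by
  have hpos : 0 < 3 * (x / y + 2) * ((x / y) ^ α + 1) := by positivity
  have h0 : warmF α ptri ![x, y, y] 0 = 0 ↔ (x / y) ^ α * (4 - x / y) = 3 * (x / y) := by
    rw [← mul_left_inj' hpos.ne', warmF_ptri_vuu_zero_mul hx hy hsum, zero_mul, sub_eq_zero]
  refine ⟨fun h => h0.1 (h 0), fun h i => ?_⟩
  fin_cases i <;>
    simp [warmF_ptri_vuu_one hx hy hsum, warmF_ptri_vuu_two hx hy hsum, h0.2 h]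

end VUU

def equilibriumExponent (s : ℝ) : ℝ := 1 + (log 3 - log (4 - s)) / log s

theorem rpow_mul_four_sub_eq_iff {α s : ℝ} (hs0 : 0 < s) (hs4 : s < 4) (hs1 : s ≠ 1) :
    s ^ α * (4 - s) = 3 * s ↔ equilibriumExponent s = α := by
  have hlog : log s ≠ 0 := log_ne_zero_of_pos_of_ne_one hs0 hs1
  rw [equilibriumExponent, ← eq_sub_iff_add_eq', div_eq_iff hlog,
    ← log_injOn_pos.eq_iff (by simp; positivity) (by simp; positivity),
    log_mul (by positivity) (by linarith), log_mul (by norm_num) hs0.ne', log_rpow hs0]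
  constructor <;> intro h <;> linarith

theorem lt_four_of_rpow_mul_four_sub_eq {α s : ℝ} (hs : 0 < s) (h : s ^ α * (4 - s) = 3 * s) :
    s < 4 := by
  by_contra! h4
  nlinarith [rpow_pos_of_pos hs α]

theorem forall_warmF_ptri_vuu_eq_zero_iff_equilibriumExponent {α x y : ℝ} (hx : 0 < x)
    (hy : 0 < y) (hxy : x ≠ y) (hsum : x + 2 * y = 1) :
    (∀ i, warmF α ptri ![x, y, y] i = 0) ↔ x / y < 4 ∧ equilibriumExponent (x / y) = α := by
  have hs0 : 0 < x / y := div_pos hx hy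
  have hs1 : x / y ≠ 1 := by rwa [Ne, div_eq_one_iff_eq hy.ne']
  rw [forall_warmF_ptri_vuu_eq_zero_iff hx hy hsum]
  exact ⟨fun h => ⟨lt_four_of_rpow_mul_four_sub_eq hs0 h,
    (rpow_mul_four_sub_eq_iff hs0 (lt_four_of_rpow_mul_four_sub_eq hs0 h) hs1).1 h⟩,
    fun h => (rpow_mul_four_sub_eq_iff hs0 h.1 hs1).2 h.2⟩

theorem forall_warmF_ptri_ratio_eq_zero {α s : ℝ} (hs0 : 0 < s) (hs4 : s < 4) (hs1 : s ≠ 1)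
    (hα : equilibriumExponent s = α) :
    ∀ i, warmF α ptri ![s / (s + 2), 1 / (s + 2), 1 / (s + 2)] i = 0 := by
  have hs2 : s + 2 ≠ 0 := by positivity
  rw [forall_warmF_ptri_vuu_eq_zero_iff_equilibriumExponent (by positivity) (by positivity)
    (by rwa [Ne, div_left_inj' hs2]) (by field_simp),
    div_div_div_cancel_right₀ hs2, div_one]
  exact ⟨hs4, hα⟩

theorem equilibriumExponent_eq_one_add_slope_div_slope {s : ℝ} (hs : s ≠ 1) :
    equilibriumExponent s = 1 + slope log 3 (4 - s) / slope log 1 s := by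
  have h1 : s - 1 ≠ 0 := sub_ne_zero.2 hs
  have h3 : 4 - s - 3 ≠ 0 := by contrapose! hs; linarith
  rw [equilibriumExponent, slope_def_field, slope_def_field, log_one, sub_zero]
  rcases eq_or_ne (log s) 0 with hl | hl
  · simp [hl]
  · field_simp
    ring

theorem strictMonoOn_equilibriumExponent :
    StrictMonoOn equilibriumExponent (Ioo 0 4 \ {1}) := by
  rintro s ⟨⟨hs0, hs4⟩, hs1 : s ≠ 1⟩ t ⟨⟨ht0, ht4⟩, ht1 : t ≠ 1⟩ hst
  rw [equilibriumExponent_eq_one_add_slope_div_slope hs1,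
    equilibriumExponent_eq_one_add_slope_div_slope ht1, add_lt_add_iff_left]
  have hs3 : 4 - s ≠ 3 := by contrapose! hs1; linarith
  have ht3 : 4 - t ≠ 3 := by contrapose! ht1; linarith
  refine div_lt_div₀' ?_ ?_ ?_ ?_
  · exact (strictConcaveOn_log_Ioi.slope_lt_slope (by norm_num) (by simp; linarith)
      (by simp; linarith) ht3 hs3 (by linarith)).le
  · exact strictConcaveOn_log_Ioi.slope_lt_slope (mem_Ioi.2 one_pos) hs0 ht0 hs1 ht1 hst
  · exact strictMonoOn_log.slope_pos (by norm_num) (by simp; linarith) ht3.symm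
  · exact strictMonoOn_log.slope_pos (by norm_num) (by simpa using ht0) ht1.symm

theorem log_lt_three_mul_log_three_sub_log_four_sub {s : ℝ} (hs0 : 0 < s) (hs4 : s < 4)
    (hs1 : s ≠ 1) : log s < 3 * (log 3 - log (4 - s)) := by
  have h3 : log ((4 - s) / 3) < (4 - s) / 3 - 1 :=
    log_lt_sub_one_of_pos (by linarith) (by contrapose! hs1; linarith)
  rw [log_div (by linarith) (by norm_num)] at h3
  linarith [log_lt_sub_one_of_pos hs0 hs1]

theorem four_thirds_lt_equilibriumExponent {s : ℝ} (hs1 : 1 < s) (hs4 : s < 4) :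
    4 / 3 < equilibriumExponent s := by
  have h := log_lt_three_mul_log_three_sub_log_four_sub (by linarith) hs4 hs1.ne'
  have : 1 / 3 < (log 3 - log (4 - s)) / log s := by
    rw [lt_div_iff₀ (log_pos hs1)]
    linarith
  rw [equilibriumExponent]
  linarith

theorem equilibriumExponent_mem_Ioo_of_lt_one {s : ℝ} (hs0 : 0 < s) (hs1 : s < 1) :
    equilibriumExponent s ∈ Set.Ioo 1 (4 / 3) := by
  have h := log_lt_three_mul_log_three_sub_log_four_sub hs0 (by linarith) hs1.ne
  have hlog : log s < 0 := log_neg hs0 hs1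
  have hnum : log 3 - log (4 - s) < 0 := sub_neg.2 (log_lt_log (by norm_num) (by linarith))
  have : (log 3 - log (4 - s)) / log s < 1 / 3 := by
    rw [div_lt_iff_of_neg hlog]
    linarith
  rw [equilibriumExponent]
  constructor <;> linarith [div_pos_of_neg_of_neg hnum hlog]

theorem continuousOn_equilibriumExponent : ContinuousOn equilibriumExponent (Ioo 0 4 \ {1}) := by
  rintro s ⟨⟨hs0, hs4⟩, hs1 : s ≠ 1⟩
  refine (continuousAt_const.add ((continuousAt_const.sub ?_).div (continuousAt_log hs0.ne')
    (log_ne_zero_of_pos_of_ne_one hs0 hs1))).continuousWithinAt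
  exact (continuousAt_log (by linarith)).comp (continuous_sub_left 4).continuousAt

theorem tendsto_equilibriumExponent_nhdsNE_one :
    Tendsto equilibriumExponent (𝓝[≠] 1) (𝓝 (4 / 3)) := by
  have h1 : Tendsto (slope log 1) (𝓝[≠] 1) (𝓝 1) := by
    simpa using hasDerivAt_iff_tendsto_slope.1 (hasDerivAt_log one_ne_zero)
  have h3 : Tendsto (slope log 3) (𝓝[≠] 3) (𝓝 3⁻¹) :=
    hasDerivAt_iff_tendsto_slope.1 (hasDerivAt_log (by norm_num))
  have hsub : Tendsto (fun s : ℝ => 4 - s) (𝓝[≠] 1) (𝓝[≠] 3) := by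
    refine tendsto_nhdsWithin_of_tendsto_nhds_of_eventually_within _ ?_
      (eventually_nhdsWithin_of_forall fun s (hs : s ≠ 1) (h : 4 - s = 3) => hs (by linarith))
    have := ((continuous_sub_left (4 : ℝ)).tendsto 1).mono_left (nhdsWithin_le_nhds (s := {1}ᶜ))
    norm_num at this
    exact this
  have := ((h3.comp hsub).div h1 one_ne_zero).const_add 1
  rw [show (4 / 3 : ℝ) = 1 + 3⁻¹ / 1 by norm_num]
  exact this.congr' (eventually_nhdsWithin_of_forall fun s hs =>
    (equilibriumExponent_eq_one_add_slope_div_slope hs).symm)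

theorem tendsto_equilibriumExponent_nhdsGT_zero :
    Tendsto equilibriumExponent (𝓝[>] 0) (𝓝 1) := by
  have hnum : Tendsto (fun s => log 3 - log (4 - s)) (𝓝[>] 0) (𝓝 (log 3 - log (4 - 0))) :=
    (tendsto_const_nhds.sub (((continuousAt_log (by norm_num)).comp
      (continuous_sub_left 4).continuousAt).tendsto)).mono_left nhdsWithin_le_nhds
  have := (hnum.div_atBot tendsto_log_nhdsGT_zero).const_add 1
  rw [add_zero] at this
  exact this

theorem tendsto_equilibriumExponent_nhdsLT_four :
    Tendsto equilibriumExponent (𝓝[<] 4) atTop := by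
  have hsub : Tendsto (fun s : ℝ => 4 - s) (𝓝[<] 4) (𝓝[>] 0) := by
    refine tendsto_nhdsWithin_of_tendsto_nhds_of_eventually_within _ ?_
      (eventually_nhdsWithin_of_forall fun s (hs : s < 4) => sub_pos.2 hs)
    have := ((continuous_sub_left (4 : ℝ)).tendsto 4).mono_left (nhdsWithin_le_nhds (s := Iio 4))
    norm_num at this
    exact this
  have hnum : Tendsto (fun s => log 3 - log (4 - s)) (𝓝[<] 4) atTop :=
    tendsto_atTop_add_const_left _ _ (tendsto_neg_atBot_atTop.comp
      (tendsto_log_nhdsGT_zero.comp hsub))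
  have hden : Tendsto (fun s => (log s)⁻¹) (𝓝[<] 4) (𝓝 (log 4)⁻¹) :=
    (((continuousAt_log (by norm_num)).inv₀ (log_pos (by norm_num)).ne').tendsto).mono_left
      nhdsWithin_le_nhds
  have := tendsto_atTop_add_const_left _ 1
    (hnum.atTop_mul_pos (inv_pos.2 (log_pos (by norm_num))) hden)
  simp only [← div_eq_mul_inv] at this
  exact this

theorem surjOn_equilibriumExponent_Ioo_one_four :
    SurjOn equilibriumExponent (Ioo 1 4) (Ioi (4 / 3)) := fun α (hα : 4 / 3 < α) =>
  mem_image_Ioo_of_eventually (by norm_num)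
    (continuousOn_equilibriumExponent.mono fun s hs => ⟨⟨by linarith [hs.1], hs.2⟩, hs.1.ne'⟩)
    ((tendsto_equilibriumExponent_nhdsNE_one.mono_left
      (nhdsWithin_mono _ fun _ h => ne_of_gt h)).eventually_lt_const hα)
    (tendsto_equilibriumExponent_nhdsLT_four.eventually_gt_atTop α)

theorem surjOn_equilibriumExponent_Ioo_zero_one :
    SurjOn equilibriumExponent (Ioo 0 1) (Set.Ioo 1 (4 / 3)) := fun α hα =>
  mem_image_Ioo_of_eventually one_pos
    (continuousOn_equilibriumExponent.mono fun s hs => ⟨⟨hs.1, by linarith [hs.2]⟩, hs.2.ne⟩)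
    (tendsto_equilibriumExponent_nhdsGT_zero.eventually_lt_const hα.1)
    ((tendsto_equilibriumExponent_nhdsNE_one.mono_left
      (nhdsWithin_mono _ fun _ h => ne_of_lt h)).eventually_const_lt hα.2)

theorem strictMonoOn_equilibriumExponent_Ioo_one_four :
    StrictMonoOn equilibriumExponent (Ioo 1 4) :=
  strictMonoOn_equilibriumExponent.mono fun s hs => ⟨⟨by linarith [hs.1], hs.2⟩, hs.1.ne'⟩

theorem strictMonoOn_equilibriumExponent_Ioo_zero_one :
    StrictMonoOn equilibriumExponent (Ioo 0 1) :=
  strictMonoOn_equilibriumExponent.mono fun s hs => ⟨⟨hs.1, by linarith [hs.2]⟩, hs.2.ne⟩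

/-- `v / u` at the equilibrium `(v, u, u)`, `v > u`; `vvuRatio α` is `u / v` (not `v / u`) at the
equilibrium `(v, v, u)`, `v > u`. -/
def vuuRatio : ℝ → ℝ := invFunOn equilibriumExponent (Ioo 1 4)

def vvuRatio : ℝ → ℝ := invFunOn equilibriumExponent (Ioo 0 1)

theorem vuuRatio_spec {α : ℝ} (hα : 4 / 3 < α) :
    vuuRatio α ∈ Set.Ioo 1 4 ∧ equilibriumExponent (vuuRatio α) = α :=
  invFunOn_pos (surjOn_equilibriumExponent_Ioo_one_four hα)

theorem vvuRatio_spec {α : ℝ} (hα : α ∈ Set.Ioo 1 (4 / 3)) :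
    vvuRatio α ∈ Set.Ioo 0 1 ∧ equilibriumExponent (vvuRatio α) = α :=
  invFunOn_pos (surjOn_equilibriumExponent_Ioo_zero_one hα)

theorem strictMonoOn_vuuRatio : StrictMonoOn vuuRatio (Ioi (4 / 3)) :=
  strictMonoOn_equilibriumExponent_Ioo_one_four.strictMonoOn_invFunOn
    surjOn_equilibriumExponent_Ioo_one_four

theorem strictMonoOn_vvuRatio : StrictMonoOn vvuRatio (Set.Ioo 1 (4 / 3)) :=
  strictMonoOn_equilibriumExponent_Ioo_zero_one.strictMonoOn_invFunOn
    surjOn_equilibriumExponent_Ioo_zero_one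

theorem tendsto_vuuRatio_nhdsGT : Tendsto vuuRatio (𝓝[>] (4 / 3)) (𝓝 1) :=
  strictMonoOn_equilibriumExponent_Ioo_one_four.tendsto_invFunOn_left (by norm_num)
    surjOn_equilibriumExponent_Ioo_one_four self_mem_nhdsWithin fun _ hs =>
      mem_of_superset (Ioo_mem_nhdsGT (four_thirds_lt_equilibriumExponent hs.1 hs.2))
        fun _ h => h.2

theorem tendsto_vuuRatio_atTop : Tendsto vuuRatio atTop (𝓝 4) :=
  strictMonoOn_equilibriumExponent_Ioo_one_four.tendsto_invFunOn_right (by norm_num)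
    surjOn_equilibriumExponent_Ioo_one_four (eventually_gt_atTop _)
    fun _ _ => eventually_gt_atTop _

theorem tendsto_vvuRatio_nhdsGT : Tendsto vvuRatio (𝓝[>] 1) (𝓝 0) :=
  strictMonoOn_equilibriumExponent_Ioo_zero_one.tendsto_invFunOn_left one_pos
    surjOn_equilibriumExponent_Ioo_zero_one (Ioo_mem_nhdsGT (by norm_num)) fun _ hs =>
      mem_of_superset (Ioo_mem_nhdsGT (equilibriumExponent_mem_Ioo_of_lt_one hs.1 hs.2).1)
        fun _ h => h.2

theorem tendsto_vvuRatio_nhdsLT : Tendsto vvuRatio (𝓝[<] (4 / 3)) (𝓝 1) :=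
  strictMonoOn_equilibriumExponent_Ioo_zero_one.tendsto_invFunOn_right one_pos
    surjOn_equilibriumExponent_Ioo_zero_one (Ioo_mem_nhdsLT (by norm_num)) fun _ hs =>
      mem_of_superset (Ioo_mem_nhdsLT (equilibriumExponent_mem_Ioo_of_lt_one hs.1 hs.2).2)
        fun _ h => h.1

def vuuWeight (α : ℝ) : ℝ := vuuRatio α / (vuuRatio α + 2)

def vvuWeight (α : ℝ) : ℝ := 1 / (vvuRatio α + 2)

theorem vuuWeight_spec {α : ℝ} (hα : 4 / 3 < α) :
    (1 - vuuWeight α) / 2 < vuuWeight α ∧ 0 < (1 - vuuWeight α) / 2 ∧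
      (∀ i, warmF α ptri ![vuuWeight α, (1 - vuuWeight α) / 2, (1 - vuuWeight α) / 2] i = 0) ∧
      ∀ a b : ℝ, b < a → 0 < b → a + 2 * b = 1 →
        (∀ i, warmF α ptri ![a, b, b] i = 0) → a = vuuWeight α := by
  obtain ⟨⟨ht1, ht4⟩, hα⟩ := vuuRatio_spec hα
  have hu : (1 - vuuWeight α) / 2 = 1 / (vuuRatio α + 2) := by
    rw [vuuWeight]
    field_simp
    ring
  rw [hu, vuuWeight]
  refine ⟨div_lt_div_of_pos_right ht1 (by linarith), by positivity,
    forall_warmF_ptri_ratio_eq_zero (by linarith) ht4 ht1.ne' hα, fun a b hba hb hsum h => ?_⟩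
  obtain ⟨hs4, hs⟩ := (forall_warmF_ptri_vuu_eq_zero_iff_equilibriumExponent (hb.trans hba) hb
    hba.ne' hsum).1 h
  have hab : a / b = vuuRatio α := strictMonoOn_equilibriumExponent_Ioo_one_four.injOn
    ⟨(one_lt_div hb).2 hba, hs4⟩ ⟨ht1, ht4⟩ (hs.trans hα.symm)
  rw [← hab, div_add' _ _ _ hb.ne', hsum, div_div_div_cancel_right₀ hb.ne', div_one]

theorem vvuWeight_spec {α : ℝ} (hα : α ∈ Set.Ioo 1 (4 / 3)) :
    1 - 2 * vvuWeight α < vvuWeight α ∧ 0 < 1 - 2 * vvuWeight α ∧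
      (∀ i, warmF α ptri ![vvuWeight α, vvuWeight α, 1 - 2 * vvuWeight α] i = 0) ∧
      ∀ a b : ℝ, b < a → 0 < b → 2 * a + b = 1 →
        (∀ i, warmF α ptri ![a, a, b] i = 0) → a = vvuWeight α := by
  obtain ⟨⟨hu0, hu1⟩, hα⟩ := vvuRatio_spec hα
  have hu : 1 - 2 * vvuWeight α = vvuRatio α / (vvuRatio α + 2) := by
    rw [vvuWeight]
    field_simp
    ring
  rw [hu, vvuWeight, ← forall_warmF_ptri_rev_eq_zero]
  refine ⟨div_lt_div_of_pos_right hu1 (by linarith), by positivity,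
    forall_warmF_ptri_ratio_eq_zero hu0 (by linarith) hu1.ne hα, fun a b hba hb hsum h => ?_⟩
  have ha := hb.trans hba
  obtain ⟨-, hs⟩ := (forall_warmF_ptri_vuu_eq_zero_iff_equilibriumExponent hb ha hba.ne
    (by linarith)).1 ((forall_warmF_ptri_rev_eq_zero ..).2 h)
  have hba' : b / a = vvuRatio α := strictMonoOn_equilibriumExponent_Ioo_zero_one.injOn
    ⟨div_pos hb ha, (div_lt_one ha).2 hba⟩ ⟨hu0, hu1⟩ (hs.trans hα.symm)
  rw [← hba', div_add' _ _ _ ha.ne', add_comm, hsum, one_div_one_div]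

theorem not_forall_warmF_ptri_vuu_eq_zero {α a b : ℝ} (hα : α ≤ 4 / 3) (hba : b < a)
    (hb : 0 < b) (hsum : a + 2 * b = 1) : ¬ ∀ i, warmF α ptri ![a, b, b] i = 0 := by
  rw [forall_warmF_ptri_vuu_eq_zero_iff_equilibriumExponent (hb.trans hba) hb hba.ne' hsum]
  rintro ⟨hs4, rfl⟩
  linarith [four_thirds_lt_equilibriumExponent ((one_lt_div hb).2 hba) hs4]

theorem not_forall_warmF_ptri_vvu_eq_zero {α a b : ℝ} (hα : 4 / 3 ≤ α) (hba : b < a)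
    (hb : 0 < b) (hsum : 2 * a + b = 1) : ¬ ∀ i, warmF α ptri ![a, a, b] i = 0 := by
  have ha := hb.trans hba
  rw [← forall_warmF_ptri_rev_eq_zero,
    forall_warmF_ptri_vuu_eq_zero_iff_equilibriumExponent hb ha hba.ne (by linarith)]
  rintro ⟨-, rfl⟩
  linarith [(equilibriumExponent_mem_Ioo_of_lt_one (div_pos hb ha) ((div_lt_one ha).2 hba)).2]

theorem strictMonoOn_vuuWeight : StrictMonoOn vuuWeight (Ioi (4 / 3)) := fun α hα β hβ hαβ => by
  have h := strictMonoOn_vuuRatio hα hβ hαβ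
  have h1 := (vuuRatio_spec hα).1.1
  rw [vuuWeight, vuuWeight, div_lt_div_iff₀ (by linarith) (by linarith)]
  linarith

theorem strictAntiOn_vvuWeight : StrictAntiOn vvuWeight (Set.Ioo 1 (4 / 3)) :=
  fun α hα β hβ hαβ => one_div_lt_one_div_of_lt (by linarith [(vvuRatio_spec hα).1.1])
    (by linarith [strictMonoOn_vvuRatio hα hβ hαβ])

theorem tendsto_vuuWeight_nhdsGT : Tendsto vuuWeight (𝓝[>] (4 / 3)) (𝓝 (1 / 3)) := by
  have := tendsto_vuuRatio_nhdsGT.div (tendsto_vuuRatio_nhdsGT.add_const 2) (by norm_num)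
  norm_num at this
  exact this

theorem tendsto_vuuWeight_atTop : Tendsto vuuWeight atTop (𝓝 (2 / 3)) := by
  have := tendsto_vuuRatio_atTop.div (tendsto_vuuRatio_atTop.add_const 2) (by norm_num)
  norm_num at this
  exact this

theorem tendsto_vvuWeight_nhdsGT : Tendsto vvuWeight (𝓝[>] 1) (𝓝 (1 / 2)) := by
  have := tendsto_const_nhds (x := (1 : ℝ)).div (tendsto_vvuRatio_nhdsGT.add_const 2)
    (by norm_num)
  norm_num at this
  exact this

theorem tendsto_vvuWeight_nhdsLT : Tendsto vvuWeight (𝓝[<] (4 / 3)) (𝓝 (1 / 3)) := by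
  have := tendsto_const_nhds (x := (1 : ℝ)).div (tendsto_vvuRatio_nhdsLT.add_const 2)
    (by norm_num)
  norm_num at this
  exact this

/-- **Triangle equilibria of the forms `(v,u,u)` and `(v,v,u)`.**
(a) For every `α > 4/3` there is exactly one equilibrium `(v,u,u)` with `v > u > 0`
(`v + 2u = 1`); `v(α)` is strictly increasing on `(4/3,∞)`, `v(α) → 1/3` as `α ↓ 4/3`,
`v(α) → 2/3` as `α → ∞`, and no such equilibrium exists for `1 < α ≤ 4/3`.
(b) For every `1 < α < 4/3` there is exactly one equilibrium `(v,v,u)` with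
`v > u > 0` (`2v + u = 1`); `v(α)` is strictly decreasing on `(1,4/3)`, `v(α) → 1/2`
as `α ↓ 1`, `v(α) → 1/3` as `α ↑ 4/3`, and no such equilibrium exists for
`α ≥ 4/3`. -/
theorem triangle_vuu_and_vvu_equilibria :
    (∃ f : ℝ → ℝ,
      StrictMonoOn f (Set.Ioi (4 / 3 : ℝ)) ∧
      Filter.Tendsto f (nhdsWithin (4 / 3) (Set.Ioi (4 / 3 : ℝ))) (nhds (1 / 3)) ∧
      Filter.Tendsto f Filter.atTop (nhds (2 / 3)) ∧
      (∀ α : ℝ, 4 / 3 < α →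
        (1 - f α) / 2 < f α ∧ 0 < (1 - f α) / 2 ∧
        (∀ i, warmF α ptri ![f α, (1 - f α) / 2, (1 - f α) / 2] i = 0) ∧
        (∀ a b : ℝ, b < a → 0 < b → a + 2 * b = 1 →
          (∀ i, warmF α ptri ![a, b, b] i = 0) → a = f α)) ∧
      (∀ α : ℝ, 1 < α → α ≤ 4 / 3 → ∀ a b : ℝ, b < a → 0 < b → a + 2 * b = 1 →
        ¬ (∀ i, warmF α ptri ![a, b, b] i = 0))) ∧
    (∃ g : ℝ → ℝ,
      StrictAntiOn g (Set.Ioo (1 : ℝ) (4 / 3)) ∧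
      Filter.Tendsto g (nhdsWithin 1 (Set.Ioi (1 : ℝ))) (nhds (1 / 2)) ∧
      Filter.Tendsto g (nhdsWithin (4 / 3) (Set.Iio (4 / 3 : ℝ))) (nhds (1 / 3)) ∧
      (∀ α : ℝ, 1 < α → α < 4 / 3 →
        1 - 2 * g α < g α ∧ 0 < 1 - 2 * g α ∧
        (∀ i, warmF α ptri ![g α, g α, 1 - 2 * g α] i = 0) ∧
        (∀ a b : ℝ, b < a → 0 < b → 2 * a + b = 1 →
          (∀ i, warmF α ptri ![a, a, b] i = 0) → a = g α)) ∧
      (∀ α : ℝ, 4 / 3 ≤ α → ∀ a b : ℝ, b < a → 0 < b → 2 * a + b = 1 →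
        ¬ (∀ i, warmF α ptri ![a, a, b] i = 0))) :=
  ⟨⟨vuuWeight, strictMonoOn_vuuWeight, tendsto_vuuWeight_nhdsGT, tendsto_vuuWeight_atTop,
      fun _ hα => vuuWeight_spec hα,
      fun _ _ hα _ _ hba hb hsum => not_forall_warmF_ptri_vuu_eq_zero hα hba hb hsum⟩,
    ⟨vvuWeight, strictAntiOn_vvuWeight, tendsto_vvuWeight_nhdsGT, tendsto_vvuWeight_nhdsLT,
      fun _ hα₁ hα₂ => vvuWeight_spec ⟨hα₁, hα₂⟩,
      fun _ hα _ _ hba hb hsum => not_forall_warmF_ptri_vvu_eq_zero hα hba hb hsum⟩⟩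

end
end

section
/- Consider the WARM triangle graph with 1 < α < 4/3. If (v_1, v_2, v_3) ∈ Δ_3 is an equilibrium with v_1 ≥ v_2 ≥ v_3 > 0, then v_1 = v_2. -/
open Finset

noncomputable section

/-!
Divided by `x ^ α`, the equation of a positive coordinate `x` reads
`(x ^ (α - 1))⁻¹ = (1 / (x ^ α + y ^ α) + 1 / (x ^ α + z ^ α)) / 3`. The points
`(x ^ α, x ^ (α - 1))` lie on the concave curve `t ↦ t ^ ((α - 1) / α)`, and subtracting two of
these equations shows that the secant slope between the points of `x` and `y` is
`x ^ (α - 1) * y ^ (α - 1) / (3 (x ^ α + z ^ α) (y ^ α + z ^ α))`. For `x > y > z` the slope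
between `x` and `y` would then exceed the one between `y` and `z`, against concavity, so two
coordinates coincide. If `y = z < x`, the equations reduce to `B (4 - w) = 3` for
`w = x / z > 1` and `B = w ^ (α - 1)`; but `α < 4/3` gives `B ^ 3 < w`, whence
`B (4 - w) < 4 B - B ^ 4 ≤ 3`.
-/

def triangleShare (α x y z : ℝ) : ℝ :=
  (x ^ α / (x ^ α + y ^ α) + x ^ α / (x ^ α + z ^ α)) / 3

def IsTriangleEquilibrium (α x y z : ℝ) : Prop :=
  x = triangleShare α x y z ∧ y = triangleShare α y x z ∧ z = triangleShare α z x y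

lemma filter_mem_card_eq_two {i j k : Fin 3} (hij : i ≠ j) (hik : i ≠ k) (hjk : j ≠ k) :
    univ.filter (fun A : Finset (Fin 3) => i ∈ A ∧ A.card = 2) = {{i, j}, {i, k}} := by
  revert i j k; decide

lemma sum_filter_mem_ptri_mul (g : Finset (Fin 3) → ℝ) {i j k : Fin 3} (hij : i ≠ j)
    (hik : i ≠ k) (hjk : j ≠ k) :
    ∑ A ∈ univ.filter (fun A : Finset (Fin 3) => i ∈ A), ptri A * g A
      = (g {i, j} + g {i, k}) / 3 := by
  have hne : ({i, j} : Finset (Fin 3)) ≠ {i, k} := by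
    revert i j k; decide
  simp only [ptri, ite_mul, zero_mul]
  rw [← Finset.sum_filter, Finset.filter_filter, filter_mem_card_eq_two hij hik hjk,
    Finset.sum_pair hne]
  ring

lemma warmF_ptri (α : ℝ) (v : Fin 3 → ℝ) {i j k : Fin 3} (hij : i ≠ j) (hik : i ≠ k)
    (hjk : j ≠ k) :
    warmF α ptri v i = -v i + triangleShare α (v i) (v j) (v k) := by
  simp only [warmF, mul_div_assoc]
  rw [sum_filter_mem_ptri_mul _ hij hik hjk, Finset.sum_pair hij, Finset.sum_pair hik,
    triangleShare]

lemma isTriangleEquilibrium_of_warmF_eq_zero {α : ℝ} {v : Fin 3 → ℝ}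
    (h : ∀ i, warmF α ptri v i = 0) : IsTriangleEquilibrium α (v 0) (v 1) (v 2) := by
  have hv : ∀ i j k : Fin 3, i ≠ j → i ≠ k → j ≠ k → v i = triangleShare α (v i) (v j) (v k) :=
    fun i j k hij hik hjk => by linarith [h i, warmF_ptri α v hij hik hjk]
  exact ⟨hv 0 1 2 (by decide) (by decide) (by decide), hv 1 0 2 (by decide) (by decide)
    (by decide), hv 2 0 1 (by decide) (by decide) (by decide)⟩

lemma inv_rpow_sub_one_eq_of_eq_triangleShare {α x y z : ℝ} (hx : 0 < x)
    (h : x = triangleShare α x y z) :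
    (x ^ (α - 1))⁻¹ = (1 / (x ^ α + y ^ α) + 1 / (x ^ α + z ^ α)) / 3 := by
  have hxα : x ^ α ≠ 0 := (Real.rpow_pos_of_pos hx α).ne'
  rw [Real.rpow_sub_one hx.ne', inv_div, div_eq_iff hxα]
  rw [triangleShare] at h
  linear_combination h

lemma sub_div_sub_eq_of_inv_eq {a b c s u v : ℝ} (hu : u ≠ 0) (hv : v ≠ 0) (hac : a + c ≠ 0)
    (hbc : b + c ≠ 0) (hab : a ≠ b) (hu' : u⁻¹ = (s + 1 / (a + c)) / 3)
    (hv' : v⁻¹ = (s + 1 / (b + c)) / 3) :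
    (u - v) / (a - b) = u * v / (3 * ((a + c) * (b + c))) := by
  have hab' : a - b ≠ 0 := sub_ne_zero.2 hab
  calc (u - v) / (a - b) = u * v * (v⁻¹ - u⁻¹) / (a - b) := by field_simp
    _ = u * v / (3 * ((a + c) * (b + c))) := by rw [hu', hv']; field_simp; ring

lemma IsTriangleEquilibrium.eq_or_eq {α x y z : ℝ} (he : IsTriangleEquilibrium α x y z)
    (hα : 1 < α) (hz : 0 < z) (hzy : z ≤ y) (hyx : y ≤ x) :
    z = y ∨ y = x := by
  by_contra! hne
  have hzy := hzy.lt_of_ne hne.1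
  have hyx := hyx.lt_of_ne hne.2
  have hy := hz.trans hzy
  have hx := hy.trans hyx
  have ex := inv_rpow_sub_one_eq_of_eq_triangleShare hx he.1
  have ey := inv_rpow_sub_one_eq_of_eq_triangleShare hy he.2.1
  have ez := inv_rpow_sub_one_eq_of_eq_triangleShare hz he.2.2
  have hpow : ∀ t : ℝ, 0 < t → (t ^ α) ^ ((α - 1) / α) = t ^ (α - 1) := fun t ht => by
    rw [← Real.rpow_mul ht.le]; congr 1; field_simp
  have hcb : z ^ α < y ^ α := Real.rpow_lt_rpow hz.le hzy (by linarith)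
  have hba : y ^ α < x ^ α := Real.rpow_lt_rpow hy.le hyx (by linarith)
  have hc : 0 < z ^ α := Real.rpow_pos_of_pos hz α
  have hslope := (Real.concaveOn_rpow (p := (α - 1) / α) (by bound) (by bound)).slope_anti_adjacent
    (Set.mem_Ici.2 hc.le) (Set.mem_Ici.2 (hc.trans (hcb.trans hba)).le) hcb hba
  simp only [hpow _ hz, hpow _ hy, hpow _ hx] at hslope
  have hux : z ^ (α - 1) < x ^ (α - 1) := Real.rpow_lt_rpow hz.le (hzy.trans hyx) (by linarith)
  have huy : 0 < y ^ (α - 1) := Real.rpow_pos_of_pos hy _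
  have huz : 0 < z ^ (α - 1) := Real.rpow_pos_of_pos hz _
  set a := x ^ α
  set b := y ^ α
  set c := z ^ α
  set ux := x ^ (α - 1)
  set uy := y ^ (α - 1)
  set uz := z ^ (α - 1)
  have hb : 0 < b := hc.trans hcb
  have hxy : (ux - uy) / (a - b) = ux * uy / (3 * ((a + c) * (b + c))) :=
    sub_div_sub_eq_of_inv_eq (huz.trans hux).ne' huy.ne' (by positivity) (by positivity) hba.ne'
      ex (by rw [ey]; ring)
  have hyz : (uy - uz) / (b - c) = uy * uz / (3 * ((b + a) * (c + a))) :=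
    sub_div_sub_eq_of_inv_eq (s := 1 / (b + c)) huy.ne' huz.ne' (by positivity) (by positivity)
      hcb.ne' (by rw [ey]; ring) (by rw [ez]; ring)
  rw [hxy, hyz] at hslope
  refine hslope.not_gt (div_lt_div₀ ?_ ?_ (by positivity) (by positivity))
  · nlinarith
  · nlinarith

lemma rpow_sub_one_mul_four_sub_lt_three {α w : ℝ} (hα1 : 1 < α) (hα2 : α < 4 / 3)
    (hw : 1 < w) : w ^ (α - 1) * (4 - w) < 3 := by
  set B := w ^ (α - 1)
  have hB : 0 < B := Real.rpow_pos_of_pos (by linarith) _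
  have hB3 : B ^ 3 < w := by
    calc B ^ 3 = w ^ ((α - 1) * 3) := by
          rw [Real.rpow_mul (by linarith)]; norm_cast
      _ < w ^ (1 : ℝ) := Real.rpow_lt_rpow_of_exponent_lt hw (by linarith)
      _ = w := Real.rpow_one w
  nlinarith [mul_nonneg (sq_nonneg (B - 1)) (by positivity : 0 ≤ B ^ 2 + 2 * B + 3)]

lemma IsTriangleEquilibrium.eq_of_le {α x z : ℝ} (he : IsTriangleEquilibrium α x z z)
    (hα1 : 1 < α) (hα2 : α < 4 / 3) (hz : 0 < z) (hzx : z ≤ x) :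
    x = z := by
  refine (hzx.eq_or_lt.resolve_right fun hlt => ?_).symm
  have ex := inv_rpow_sub_one_eq_of_eq_triangleShare (hz.trans hlt) he.1
  have ez := inv_rpow_sub_one_eq_of_eq_triangleShare hz he.2.2
  set w := x / z
  have hw : 1 < w := (one_lt_div hz).2 hlt
  have hxw : x = w * z := (div_mul_cancel₀ x hz.ne').symm
  have hxu : x ^ (α - 1) = w ^ (α - 1) * z ^ (α - 1) := by
    rw [hxw, Real.mul_rpow (by linarith) hz.le]
  have hzα : z ^ α = z * z ^ (α - 1) := by
    rw [Real.rpow_sub_one hz.ne']; field_simp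
  have hxα : x ^ α = w * w ^ (α - 1) * z ^ α := by
    rw [Real.rpow_sub_one (by linarith : w ≠ 0), hxw, Real.mul_rpow (by linarith) hz.le]
    field_simp
  rw [hxu, hxα, hzα] at ex
  rw [hxα, hzα] at ez
  field_simp at ex ez
  have key : w ^ (α - 1) * (4 - w) = 3 := by
    linear_combination ez - 2 * ex
  exact (rpow_sub_one_mul_four_sub_lt_three hα1 hα2 hw).ne key

theorem triangle_top_two_equal_of_small_alpha_general (α : ℝ) (hα1 : 1 < α) (hα2 : α < 4 / 3)
    (v : Fin 3 → ℝ) (heq : ∀ i, warmF α ptri v i = 0)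
    (h21 : v 1 ≤ v 0) (h32 : v 2 ≤ v 1) (h3 : 0 < v 2) :
    v 0 = v 1 := by
  have he := isTriangleEquilibrium_of_warmF_eq_zero heq
  rcases he.eq_or_eq hα1 h3 h32 h21 with h | h
  · rw [← h] at he ⊢
    exact he.eq_of_le hα1 hα2 h3 (h32.trans h21)
  · exact h.symm

/-- **Triangle graph, `1 < α < 4/3`.** Every equilibrium `(v₁,v₂,v₃)` with
`v₁ ≥ v₂ ≥ v₃ > 0` satisfies `v₁ = v₂`. -/
theorem triangle_top_two_equal_of_small_alpha (α : ℝ) (hα1 : 1 < α) (hα2 : α < 4 / 3)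
    (v : Fin 3 → ℝ) (hv : InSimplex v) (heq : ∀ i, warmF α ptri v i = 0)
    (h21 : v 1 ≤ v 0) (h32 : v 2 ≤ v 1) (h3 : 0 < v 2) :
    v 0 = v 1 :=
  triangle_top_two_equal_of_small_alpha_general α hα1 hα2 v heq h21 h32 h3

end
end
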